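/- Let g_6(x,y) = y⁴ + y³(1+x) + y²(1+x+x²) + y(1+x+x²+x³) + 1+x+x²+x³+x⁴ ∈ 𝔽₂[x,y] (so that (x+y)(x+1)(y+1)·g_6(x,y) = x·y⁶ + y·x⁶ + x⁶ + y⁶ + x + y). Let ω be a generator of GF(4)* (so ω² + ω + 1 = 0), and set A(x,y) = 1 + ωx + x² + (ω + ωx)y + y² and B(x,y) = 1 + ω²x + x² + (ω² + ω²x)y + y² in GF(4)[x,y]. Then g_6(x,y) = A(x,y)·B(x,y), and both A and B are absolutely irreducible, i.e., irreducible as elements of K[x,y] for K an algebraic closure of 𝔽₂ containing GF(4). -/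

import Mathlib

open MvPolynomial

/-- The algebraic closure of `𝔽₂`. -/
abbrev Kbar : Type := AlgebraicClosure (ZMod 2)

lemma kbar_two : (2 : Kbar) = 0 := by
  have := CharP.cast_eq_zero Kbar 2
  exact_mod_cast this

/-- The iso `Kbar[x,y] ≃ (Kbar[y])[x]`. -/
noncomputable def ee : MvPolynomial (Fin 2) Kbar ≃ₐ[Kbar] Polynomial (Polynomial Kbar) :=
  (finSuccEquiv Kbar 1).trans <| Polynomial.mapAlgEquiv <|
    (finSuccEquiv Kbar 0).trans <| Polynomial.mapAlgEquiv (isEmptyAlgEquiv Kbar (Fin 0))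

lemma ee_X0 : ee (X 0) = Polynomial.X := by
  simp [ee, finSuccEquiv_X_zero, Polynomial.coe_mapAlgEquiv]

lemma ee_X1 : ee (X 1) = Polynomial.C Polynomial.X := by
  have h1 : (finSuccEquiv Kbar 1) (X 1) = Polynomial.C (X 0) := by
    rw [show (X 1 : MvPolynomial (Fin 2) Kbar) = X (Fin.succ 0) from rfl, finSuccEquiv_X_succ]
  rw [ee]
  simp [h1, Polynomial.map_C, Polynomial.map_X, finSuccEquiv_X_zero,
    Polynomial.coe_mapAlgEquiv, AlgEquiv.trans_apply]

lemma ee_C (u : Kbar) : ee (C u) = Polynomial.C (Polynomial.C u) := by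
  rw [ee]
  simp [finSuccEquiv_apply, Polynomial.coe_mapAlgEquiv, Polynomial.map_C, isEmptyAlgEquiv]
  exact AlgEquiv.commutes (AddMonoidAlgebra.uniqueAlgEquiv Kbar (Fin 0 →₀ ℕ)) u

lemma quad_eq {R : Type*} [CommRing R] {p q r s t w : R}
    (h : Polynomial.C p * Polynomial.X ^ 2 + Polynomial.C q * Polynomial.X + Polynomial.C r
       = Polynomial.C s * Polynomial.X ^ 2 + Polynomial.C t * Polynomial.X + Polynomial.C w) :
    p = s ∧ q = t ∧ r = w := by
  refine ⟨?_, ?_, ?_⟩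
  · have := congrArg (fun f => Polynomial.coeff f 2) h
    simpa [Polynomial.coeff_add, Polynomial.coeff_C_mul, Polynomial.coeff_X_pow,
      Polynomial.coeff_X, Polynomial.coeff_C] using this
  · have := congrArg (fun f => Polynomial.coeff f 1) h
    simpa [Polynomial.coeff_add, Polynomial.coeff_C_mul, Polynomial.coeff_X_pow,
      Polynomial.coeff_X, Polynomial.coeff_C] using this
  · have := congrArg (fun f => Polynomial.coeff f 0) h
    simpa [Polynomial.coeff_add, Polynomial.coeff_C_mul, Polynomial.coeff_X_pow,
      Polynomial.coeff_X, Polynomial.coeff_C] using this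

lemma lin_eq {R : Type*} [CommRing R] {q r t w : R}
    (h : Polynomial.C q * Polynomial.X + Polynomial.C r
       = Polynomial.C t * Polynomial.X + Polynomial.C w) :
    q = t ∧ r = w := by
  refine ⟨?_, ?_⟩
  · have := congrArg (fun f => Polynomial.coeff f 1) h
    simpa [Polynomial.coeff_add, Polynomial.coeff_C_mul,
      Polynomial.coeff_X, Polynomial.coeff_C] using this
  · have := congrArg (fun f => Polynomial.coeff f 0) h
    simpa [Polynomial.coeff_add, Polynomial.coeff_C_mul,
      Polynomial.coeff_X, Polynomial.coeff_C] using this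

lemma quad_field (u a1 b1 a2 b2 : Kbar) (hu : u ^ 2 + u + 1 = 0)
    (h1 : a1 + a2 = u) (h2 : b1 + b2 = u) (h3 : a1 * a2 = 1)
    (h4 : a1 * b2 + b1 * a2 = u) (h5 : b1 * b2 = 1) : False := by
  have h7 := kbar_two
  have : (1 : Kbar) = 0 := by
    linear_combination (b1 + b1*u + b1^2 + a1*u + a1*b1) * h1 +
      (b1*u + a1 + a1*u + a1*b1 + a1^2) * h2 +
      u * h3 +
      (1 + u + b1 + a1) * h4 +
      u * h5 + hu +
      (u + b1*u + b1*u^2 - b1*b2*u - b1*a2 - b1*a2*u - b1^2*a2 + a1*u + a1*u^2 - a1*b2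
        - a1*b2*u - a1*a2*u - a1*b1 - a1*b1*b2 - a1*b1*a2 - a1*b1^2 - a1^2*b2 - a1^2*b1) * h7
  exact one_ne_zero this

/-- Irreducibility of the quadratic `q = X² + (u(1+t))·X + (t² + u t + 1)` over `Kbar[t]`. -/
lemma quad_irred_poly (u : Kbar) (hu : u ^ 2 + u + 1 = 0) :
    Irreducible (Polynomial.X ^ 2
      + Polynomial.C (Polynomial.C u * (1 + Polynomial.X)) * Polynomial.X
      + Polynomial.C (Polynomial.X ^ 2 + Polynomial.C u * Polynomial.X + 1)
      : Polynomial (Polynomial Kbar)) := by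
  set b : Polynomial Kbar := Polynomial.C u * (1 + Polynomial.X) with hb
  set c : Polynomial Kbar := Polynomial.X ^ 2 + Polynomial.C u * Polynomial.X + 1 with hc
  set q : Polynomial (Polynomial Kbar) :=
    Polynomial.X ^ 2 + Polynomial.C b * Polynomial.X + Polynomial.C c with hq
  have hq' : q = Polynomial.C 1 * Polynomial.X ^ 2 + Polynomial.C b * Polynomial.X
      + Polynomial.C c := by rw [hq, map_one, one_mul]
  have hqm : q.Monic := by
    rw [hq, add_assoc]
    refine Polynomial.monic_X_pow_add ?_
    calc (Polynomial.C b * Polynomial.X + Polynomial.C c).degree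
        ≤ max (Polynomial.C b * Polynomial.X).degree (Polynomial.C c).degree :=
          Polynomial.degree_add_le _ _
      _ < 2 := by
          refine max_lt ?_ ?_
          · exact lt_of_le_of_lt (Polynomial.degree_C_mul_X_le b) (by decide)
          · exact lt_of_le_of_lt Polynomial.degree_C_le (by decide)
  have hqd : q.natDegree = 2 := by
    rw [hq']
    exact Polynomial.natDegree_quadratic one_ne_zero
  by_contra hirr
  obtain ⟨c₁, c₂, hmul, hadd⟩ :=
    (hqm.not_irreducible_iff_exists_add_mul_eq_coeff hqd).mp hirr
  have hq0 : q.coeff 0 = c := by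
    simp [hq, Polynomial.coeff_add, Polynomial.coeff_C_mul, Polynomial.coeff_X_pow]
  have hq1 : q.coeff 1 = b := by
    simp [hq, Polynomial.coeff_add, Polynomial.coeff_C_mul, Polynomial.coeff_X_pow]
  rw [hq0] at hmul
  rw [hq1] at hadd
  -- degrees
  have hc2 : c.coeff 2 = 1 := by
    simp [hc, Polynomial.coeff_add, Polynomial.coeff_C_mul, Polynomial.coeff_X_pow,
      Polynomial.coeff_one]
  have hcne : c ≠ 0 := by intro h; rw [h] at hc2; simp at hc2
  have hc1ne : c₁ ≠ 0 := by rintro rfl; simp at hmul; exact hcne hmul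
  have hc2ne : c₂ ≠ 0 := by rintro rfl; simp at hmul; exact hcne hmul
  have hcd : c.natDegree = 2 := by
    have h : c = Polynomial.C 1 * Polynomial.X ^ 2 + Polynomial.C u * Polynomial.X
        + Polynomial.C 1 := by rw [hc, map_one, one_mul]
    rw [h]
    exact Polynomial.natDegree_quadratic one_ne_zero
  have hsum : c₁.natDegree + c₂.natDegree = 2 := by
    rw [← Polynomial.natDegree_mul hc1ne hc2ne, ← hmul, hcd]
  have hbd : b.natDegree ≤ 1 := by
    have h : b = Polynomial.C u * Polynomial.X + Polynomial.C u := by rw [hb]; ring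
    rw [h]
    exact Polynomial.natDegree_linear_le
  have hd1 : c₁.natDegree ≤ 1 := by
    by_contra h
    push_neg at h
    have h2' : c₂.natDegree = 0 := by omega
    have hsub : c₁ = b - c₂ := by rw [hadd]; ring
    have := hsub ▸ (Polynomial.natDegree_sub_le b c₂)
    simp [h2'] at this
    omega
  have hd2 : c₂.natDegree ≤ 1 := by
    by_contra h
    push_neg at h
    have h1' : c₁.natDegree = 0 := by omega
    have hsub : c₂ = b - c₁ := by rw [hadd]; ring
    have := hsub ▸ (Polynomial.natDegree_sub_le b c₁)
    simp [h1'] at this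
    omega
  obtain h₁ := Polynomial.eq_X_add_C_of_natDegree_le_one hd1
  obtain h₂ := Polynomial.eq_X_add_C_of_natDegree_le_one hd2
  set a1 := c₁.coeff 1; set b1 := c₁.coeff 0
  set a2 := c₂.coeff 1; set b2 := c₂.coeff 0
  rw [h₁, h₂] at hmul hadd
  have hm2 : Polynomial.C (1:Kbar) * Polynomial.X ^ 2 + Polynomial.C u * Polynomial.X
      + Polynomial.C 1
      = Polynomial.C (a1 * a2) * Polynomial.X ^ 2
        + Polynomial.C (a1 * b2 + b1 * a2) * Polynomial.X + Polynomial.C (b1 * b2) := by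
    rw [map_one, one_mul, ← hc, hmul]
    simp only [map_mul, map_add]
    ring
  have hl : Polynomial.C u * Polynomial.X + Polynomial.C u
      = Polynomial.C (a1 + a2) * Polynomial.X + Polynomial.C (b1 + b2) := by
    have hb' : b = Polynomial.C u * Polynomial.X + Polynomial.C u := by rw [hb]; ring
    rw [← hb', hadd]
    simp only [map_add]
    ring
  obtain ⟨e3, e4, e5⟩ := quad_eq hm2
  obtain ⟨e1, e2⟩ := lin_eq hl
  exact quad_field u a1 b1 a2 b2 hu e1.symm e2.symm e3.symm e4.symm e5.symm

/-- Irreducibility of the MvPolynomial quadratic. -/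
lemma quad_irred (u : Kbar) (hu : u ^ 2 + u + 1 = 0) :
    Irreducible (1 + C u * X 0 + X 0 ^ 2 + (C u + C u * X 0) * X 1 + X 1 ^ 2
      : MvPolynomial (Fin 2) Kbar) := by
  rw [← MulEquiv.irreducible_iff (ee : MvPolynomial (Fin 2) Kbar ≃* Polynomial (Polynomial Kbar))]
  have h : (ee : MvPolynomial (Fin 2) Kbar ≃* Polynomial (Polynomial Kbar))
      (1 + C u * X 0 + X 0 ^ 2 + (C u + C u * X 0) * X 1 + X 1 ^ 2)
      = Polynomial.X ^ 2
        + Polynomial.C (Polynomial.C u * (1 + Polynomial.X)) * Polynomial.X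
        + Polynomial.C (Polynomial.X ^ 2 + Polynomial.C u * Polynomial.X + 1) := by
    show ee _ = _
    simp only [map_add, map_mul, map_pow, map_one, ee_X0, ee_X1, ee_C]
    ring
  rw [h]
  exact quad_irred_poly u hu

set_option maxHeartbeats 1000000 in
/-- Let `g₆(x,y) = y⁴ + y³(1+x) + y²(1+x+x²) + y(1+x+x²+x³) + 1+x+x²+x³+x⁴`
in `𝔽₂[x,y]` (so `(x+y)(x+1)(y+1)·g₆ = x·y⁶ + y·x⁶ + x⁶ + y⁶ + x + y`).  Let `ω` generate
`GF(4)*` (so `ω² + ω + 1 = 0`), and set `A = 1 + ωx + x² + (ω + ωx)y + y²`,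
`B = 1 + ω²x + x² + (ω² + ω²x)y + y²`.  Then `g₆ = A·B`, and `A` and `B` are absolutely
irreducible, i.e. irreducible over the algebraic closure of `𝔽₂`. -/
theorem g_six_factorization
    (g6 : MvPolynomial (Fin 2) (ZMod 2))
    (hg6 : g6 = X 1 ^ 4 + X 1 ^ 3 * (1 + X 0) + X 1 ^ 2 * (1 + X 0 + X 0 ^ 2) +
        X 1 * (1 + X 0 + X 0 ^ 2 + X 0 ^ 3) + (1 + X 0 + X 0 ^ 2 + X 0 ^ 3 + X 0 ^ 4))
    (ω : Kbar) (hω : ω ^ 2 + ω + 1 = 0)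
    (A B : MvPolynomial (Fin 2) Kbar)
    (hA : A = 1 + C ω * X 0 + X 0 ^ 2 + (C ω + C ω * X 0) * X 1 + X 1 ^ 2)
    (hB : B = 1 + C (ω ^ 2) * X 0 + X 0 ^ 2 + (C (ω ^ 2) + C (ω ^ 2) * X 0) * X 1 + X 1 ^ 2) :
    (X 0 + X 1) * (X 0 + 1) * (X 1 + 1) * g6 =
      X 0 * X 1 ^ 6 + X 1 * X 0 ^ 6 + X 0 ^ 6 + X 1 ^ 6 + X 0 + X 1 ∧
    MvPolynomial.map (algebraMap (ZMod 2) Kbar) g6 = A * B ∧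
    Irreducible A ∧ Irreducible B := by
  have h2K : (2 : Kbar) = 0 := kbar_two
  have h2C : (2 : MvPolynomial (Fin 2) Kbar) = 0 := by
    have := CharP.cast_eq_zero (MvPolynomial (Fin 2) Kbar) 2
    exact_mod_cast this
  have h2Z : (2 : MvPolynomial (Fin 2) (ZMod 2)) = 0 := by
    have := CharP.cast_eq_zero (MvPolynomial (Fin 2) (ZMod 2)) 2
    exact_mod_cast this
  refine ⟨?_, ?_, ?_, ?_⟩
  · subst hg6
    linear_combination (X 1 ^ 2 + X 1 ^ 3 + X 1 ^ 4 + X 1 ^ 5 + 2 * X 0 * X 1 + 3 * X 0 * X 1 ^ 2 + 3 * X 0 * X 1 ^ 3 + 3 * X 0 * X 1 ^ 4 + 2 * X 0 * X 1 ^ 5 + X 0 ^ 2 + 3 * X 0 ^ 2 * X 1 + 4 * X 0 ^ 2 * X 1 ^ 2 + 4 * X 0 ^ 2 * X 1 ^ 3 + 3 * X 0 ^ 2 * X 1 ^ 4 + X 0 ^ 2 * X 1 ^ 5 + X 0 ^ 3 + 3 * X 0 ^ 3 * X 1 + 4 * X 0 ^ 3 * X 1 ^ 2 + 3 * X 0 ^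 3 * X 1 ^ 3 + X 0 ^ 3 * X 1 ^ 4 + X 0 ^ 4 + 3 * X 0 ^ 4 * X 1 + 3 * X 0 ^ 4 * X 1 ^ 2 + X 0 ^ 4 * X 1 ^ 3 + X 0 ^ 5 + 2 * X 0 ^ 5 * X 1 + X 0 ^ 5 * X 1 ^ 2) * h2Z
  · subst hg6 hA hB
    have hωC : (C ω : MvPolynomial (Fin 2) Kbar) ^ 2 + C ω + 1 = 0 := by
      have h := congrArg (C : Kbar → MvPolynomial (Fin 2) Kbar) hω
      simpa [map_add, map_pow] using h
    simp only [map_add, map_mul, map_pow, map_one, MvPolynomial.map_X]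
    linear_combination (-1 : MvPolynomial (Fin 2) Kbar) * ((X 1 - X 1 ^ 2 + X 1 ^ 2 * (C ω) + X 1 ^ 3 + X 0 - X 0 * X 1 + 2 * X 0 * X 1 * (C ω) - X 0 * X 1 ^ 2 + 2 * X 0 * X 1 ^ 2 * (C ω) + X 0 * X 1 ^ 3 - X 0 ^ 2 + X 0 ^ 2 * (C ω) - X 0 ^ 2 * X 1 + 2 * X 0 ^ 2 * X 1 * (C ω) - X 0 ^ 2 * X 1 ^ 2 + X 0 ^ 2 * X 1 ^ 2 * (C ω) + X 0 ^ 3 + X 0 ^ 3 * X 1) * hωC + (-(X 1) + X 1 ^ 2 - X 1 ^ 3 - X 0 - X 0 * X 1 ^ 3 + X 0 ^ 2 + X 0 ^ 2 * X 1 ^ 2 - X 0 ^ 3 - X 0 ^ 3 * X 1) * h2C)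
  · rw [hA]; exact quad_irred ω hω
  · rw [hB]
    refine quad_irred (ω ^ 2) ?_
    linear_combination (ω ^ 2 + ω + 1) * hω - (ω ^ 3 + ω ^ 2 + ω) * h2K
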